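/- Let S take values in a finite set and H be a square-integrable random variable with π_a ∈ (0,1). Define V = S₀² [ (1/π_a) E[Var(H|S)] + Var(E[H|S]) ] and Ṽ = (S₀²/π_a) Var(H), for a constant S₀. If E[H] = 0, then Ṽ − V = S₀² ((1−π_a)/π_a) E[ E[H|S]² ] ≥ 0, so V ≤ Ṽ. -/

import Mathlib

open MeasureTheory ProbabilityTheory

lemma condexp_ae_eq_condExpL2' {Ω : Type*} {mS m0 : MeasurableSpace Ω}
    (hmS : mS ≤ m0) (μ : Measure Ω) [IsProbabilityMeasure μ]
    {H : Ω → ℝ} (hH : MemLp H 2 μ) :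
    (μ[H|mS]) =ᵐ[μ] (condExpL2 ℝ ℝ hmS (hH.toLp H) : Ω → ℝ) := by
  have hfin : ∀ s : Set Ω, MeasurableSet[mS] s → μ s < ⊤ →
      IntegrableOn (condExpL2 ℝ ℝ hmS (hH.toLp H) : Ω → ℝ) s μ := fun s _ hs =>
    integrableOn_Lp_of_measure_ne_top _ fact_one_le_two_ennreal.elim hs.ne
  refine (ae_eq_condExp_of_forall_setIntegral_eq hmS (hH.integrable one_le_two) hfin
    (fun s hs hμs => ?_) ?_).symm
  · rw [integral_condExpL2_eq hmS (hH.toLp H) hs hμs.ne]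
    exact setIntegral_congr_ae (hmS s hs) ((hH.coeFn_toLp).mono fun x hx _ => hx)
  · exact lpMeas.aestronglyMeasurable _

lemma memℒp_two_condexp {Ω : Type*} {mS m0 : MeasurableSpace Ω}
    (hmS : mS ≤ m0) (μ : Measure Ω) [IsProbabilityMeasure μ]
    {H : Ω → ℝ} (hH : MemLp H 2 μ) :
    MemLp (μ[H|mS]) 2 μ :=
 by
  have h := Lp.memLp ((condExpL2 ℝ ℝ hmS (hH.toLp H) : lpMeas ℝ ℝ mS 2 μ) : Lp ℝ 2 μ)
  exact h.ae_eq (condexp_ae_eq_condExpL2' hmS μ hH).symm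

lemma integrable_mul_of_memℒp_two {Ω : Type*} {m0 : MeasurableSpace Ω}
    (μ : Measure Ω) {f g : Ω → ℝ} (hf : MemLp f 2 μ) (hg : MemLp g 2 μ) :
    Integrable (fun ω => f ω * g ω) μ := by
  have := L2.integrable_inner (𝕜 := ℝ) (hf.toLp f) (hg.toLp g)
  refine this.congr ?_
  filter_upwards [hf.coeFn_toLp, hg.coeFn_toLp] with ω h1 h2
  simp [h1, h2, real_inner_comm, mul_comm]

/-- For a mean-zero square-integrable `H` and `V = S₀²[(1/π_a)E[Var(H|S)] + Var(E[H|S])]`,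
`Ṽ = (S₀²/π_a)Var(H)`, we have `Ṽ - V = S₀²((1-π_a)/π_a)·E[E[H|S]²] ≥ 0`, so `V ≤ Ṽ`. -/
theorem km_variance_comparison
    {Ω : Type*} [m0 : MeasurableSpace Ω]
    (μ : Measure Ω) [IsProbabilityMeasure μ]
    (H : Ω → ℝ) (hH : MemLp H 2 μ) (hmean : ∫ ω, H ω ∂μ = 0)
    (S0 πa : ℝ) (hπa : 0 < πa ∧ πa < 1)
    (mS : MeasurableSpace Ω) (hmS : mS ≤ m0)
    (V Vt : ℝ)
    (hV : V = S0 ^ 2 * ((1 / πa) * ∫ ω, (H ω - (μ[H|mS]) ω) ^ 2 ∂μ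
        + variance (μ[H|mS]) μ))
    (hVt : Vt = S0 ^ 2 / πa * variance H μ) :
    Vt - V = S0 ^ 2 * ((1 - πa) / πa) * ∫ ω, ((μ[H|mS]) ω) ^ 2 ∂μ ∧ V ≤ Vt := by
  obtain ⟨hπ0, hπ1⟩ := hπa
  set E : Ω → ℝ := μ[H|mS] with hE
  have hHint : Integrable H μ := hH.integrable one_le_two
  have hE2 : MemLp E 2 μ := memℒp_two_condexp hmS μ hH
  have hEmean : ∫ ω, E ω ∂μ = 0 := by
    rw [hE, integral_condExp hmS, hmean]
  -- orthogonality: ∫ E * H = ∫ E ^ 2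
  have hmulint : Integrable (fun ω => E ω * H ω) μ := integrable_mul_of_memℒp_two μ hE2 hH
  have horth : ∫ ω, E ω * H ω ∂μ = ∫ ω, E ω ^ 2 ∂μ := by
    have hpull : μ[fun ω => E ω * H ω|mS] =ᵐ[μ] fun ω => E ω * E ω := by
      have := condExp_mul_of_stronglyMeasurable_left (m := mS) (μ := μ)
        (stronglyMeasurable_condExp (f := H)) hmulint hHint
      exact this
    calc ∫ ω, E ω * H ω ∂μ = ∫ ω, (μ[fun ω => E ω * H ω|mS]) ω ∂μ :=
          (integral_condExp hmS).symm
      _ = ∫ ω, E ω * E ω ∂μ := integral_congr_ae hpull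
      _ = ∫ ω, E ω ^ 2 ∂μ := by simp [sq]
  -- decomposition of ∫ (H - E)^2
  have hHsq : Integrable (fun ω => H ω ^ 2) μ := hH.integrable_sq
  have hEsq : Integrable (fun ω => E ω ^ 2) μ := hE2.integrable_sq
  have hdecomp : ∫ ω, (H ω - E ω) ^ 2 ∂μ = (∫ ω, H ω ^ 2 ∂μ) - ∫ ω, E ω ^ 2 ∂μ := by
    have heq : ∀ ω, (H ω - E ω) ^ 2 = H ω ^ 2 - 2 * (E ω * H ω) + E ω ^ 2 := by
      intro ω; ring
    have h1 : Integrable (fun ω => H ω ^ 2 - 2 * (E ω * H ω)) μ :=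
      hHsq.sub (hmulint.const_mul 2)
    simp_rw [heq]
    rw [integral_add h1 hEsq, integral_sub hHsq (hmulint.const_mul 2),
      integral_const_mul, horth]
    ring
  have hvarH : variance H μ = ∫ ω, H ω ^ 2 ∂μ := by
    rw [variance_eq_sub hH]
    simp [hmean]
  have hvarE : variance E μ = ∫ ω, E ω ^ 2 ∂μ := by
    rw [variance_eq_sub hE2]
    simp [hEmean]
  have hEsqnn : 0 ≤ ∫ ω, E ω ^ 2 ∂μ := integral_nonneg fun ω => sq_nonneg _
  constructor
  · rw [hV, hVt, hvarH, hvarE, hdecomp]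
    field_simp
    ring
  · have key : Vt - V = S0 ^ 2 * ((1 - πa) / πa) * ∫ ω, E ω ^ 2 ∂μ := by
      rw [hV, hVt, hvarH, hvarE, hdecomp]
      field_simp
      ring
    have : 0 ≤ Vt - V := by
      rw [key]
      exact mul_nonneg (mul_nonneg (sq_nonneg _)
        (div_nonneg (by linarith) hπ0.le)) hEsqnn
    linarith
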